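/- The vertex expansion of the d-dimensional hypercube graph is Ω(1/√d): there is a constant C > 0 such that for every nonempty S ⊆ {0,1}^d with |S| ≤ 2^{d-1}, the number of vertices outside S adjacent to some vertex of S is at least C·|S|/√d. -/

import Mathlib

/-!
For `A ⊆ {0,1}^d` and `x ∉ A` let `h_A(x)` be the number of neighbours of `x` in `A`.
Talagrand's inequality `∑_{x ∉ A} √h_A(x) ≥ |A| (2^d - |A|) / 2^d` holds by induction on `d`:
split the cube along the first coordinate into two subcubes with traces `A₀`, `A₁`. For `x` in
one subcube, `h_A(x)` is its in-degree within that subcube plus one if its neighbour across the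
split lies in `A`, so Cauchy–Schwarz `p √a + q √b ≤ √(p² + q²) √(a + b)` with
`p = |A₀|(2^(d-1) - |A₀|)/2^(d-1) + |A₁|(2^(d-1) - |A₁|)/2^(d-1)` and `q = | |A₀| - |A₁| |`
combines the two induction hypotheses; what remains is an inequality between real numbers.
Since `h_A(x) ≤ d`, and `h_A(x) > 0` only on `N(A)`, the left side is at most `|N(A)| √d`, while
for `|A| ≤ 2^(d-1)` the right side is at least `|A| / 2`.
-/

open scoped Classical

/-- Two vertices of the hypercube `{0,1}^d` are adjacent iff they differ in exactly
one coordinate. -/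
def CubeAdj {d : ℕ} (u v : Fin d → Fin 2) : Prop :=
  (Finset.univ.filter fun i => u i ≠ v i).card = 1

/-- The outside neighborhood of a set `S` of hypercube vertices. -/
noncomputable def cubeNbhd {d : ℕ} (S : Finset (Fin d → Fin 2)) : Finset (Fin d → Fin 2) :=
  Finset.univ.filter fun v => v ∉ S ∧ ∃ u ∈ S, CubeAdj u v

open Finset

lemma mul_sqrt_add_mul_sqrt_le {p q a b : ℝ} (ha : 0 ≤ a) (hb : 0 ≤ b) :
    p * √a + q * √b ≤ √(p ^ 2 + q ^ 2) * √(a + b) := by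
  rw [← Real.sqrt_mul (by positivity)]
  refine Real.le_sqrt_of_sq_le ?_
  nlinarith [Real.sq_sqrt ha, Real.sq_sqrt hb, sq_nonneg (p * √b - q * √a)]

lemma sqrt_le_of_mul_add_mul_le {p q x y z : ℝ} (hp : 0 ≤ p) (hq : 0 ≤ q) (hpx : p ≤ x)
    (hqy : q ≤ y) (hz : 0 ≤ z) (h : p * x + q * y ≤ √(p ^ 2 + q ^ 2) * z) :
    √(p ^ 2 + q ^ 2) ≤ z := by
  set s := √(p ^ 2 + q ^ 2)
  have hs : s * s ≤ s * z := by
    rw [Real.mul_self_sqrt (by positivity)]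
    nlinarith
  rcases (show 0 ≤ s from Real.sqrt_nonneg _).eq_or_lt with hs0 | hs0
  · rwa [← hs0]
  · exact le_of_mul_le_mul_left hs hs0

lemma add_mul_sub_div_le_sqrt {N a b : ℝ} (hN : 0 < N) (ha : 0 ≤ a) (haN : a ≤ N) (hb : 0 ≤ b)
    (hbN : b ≤ N) :
    (a + b) * (2 * N - (a + b)) / (2 * N) ≤
      √((a * (N - a) / N + b * (N - b) / N) ^ 2 + (a - b) ^ 2) := by
  set p := a * (N - a) / N + b * (N - b) / N
  have hsplit : (a + b) * (2 * N - (a + b)) / (2 * N) = p + (a - b) ^ 2 / (2 * N) := by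
    simp only [p]; field_simp; ring
  have hp : p ≤ N / 2 := by
    simp only [p]
    rw [← add_div, div_le_iff₀ hN]
    nlinarith [sq_nonneg (N - 2 * a), sq_nonneg (N - 2 * b)]
  set v := (a - b) ^ 2 / (2 * N)
  have hv : 0 ≤ v := by positivity
  have hvN : v ≤ N / 2 := by
    rw [div_le_iff₀ (by positivity)]
    nlinarith [mul_nonneg (by linarith : 0 ≤ N - a + b) (by linarith : 0 ≤ N + a - b)]
  have huv : (a - b) ^ 2 = 2 * N * v := by simp only [v]; field_simp
  rw [hsplit, huv]
  refine Real.le_sqrt_of_sq_le ?_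
  nlinarith [mul_le_mul_of_nonneg_left (by linarith : 2 * p + v ≤ 2 * N) hv]

lemma Finset.abs_card_sub_card_le_card_sdiff_add_card_sdiff {α : Type*} [DecidableEq α]
    (s t : Finset α) : |(#s : ℝ) - #t| ≤ #(t \ s) + #(s \ t) := by
  have hs : (#s : ℝ) ≤ #(s \ t) + #t := by exact_mod_cast card_le_card_sdiff_add_card
  have ht : (#t : ℝ) ≤ #(t \ s) + #s := by exact_mod_cast card_le_card_sdiff_add_card
  rw [abs_sub_le_iff]
  constructor <;> linarith

namespace Hypercube

variable {d : ℕ}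

def flip (x : Fin d → Fin 2) (i : Fin d) : Fin d → Fin 2 :=
  Function.update x i (x i + 1)

def inDegree (A : Finset (Fin d → Fin 2)) (x : Fin d → Fin 2) : ℕ :=
  #{i | flip x i ∈ A}

noncomputable def sqrtBoundary (A : Finset (Fin d → Fin 2)) : ℝ :=
  ∑ x ∈ Aᶜ, √(inDegree A x)

def slice (A : Finset (Fin (d + 1) → Fin 2)) (c : Fin 2) : Finset (Fin d → Fin 2) :=
  {x | Fin.cons c x ∈ A}

lemma cubeAdj_flip (x : Fin d → Fin 2) (i : Fin d) : CubeAdj (flip x i) x := by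
  refine card_eq_one.mpr ⟨i, ext fun j => ?_⟩
  rcases eq_or_ne j i with rfl | hj
  · rw [mem_filter]; simp [flip, show ∀ t : Fin 2, t + 1 ≠ t by decide]
  · rw [mem_filter]; simp [flip, hj]

lemma inDegree_le (A : Finset (Fin d → Fin 2)) (x : Fin d → Fin 2) : inDegree A x ≤ d :=
  (card_filter_le _ _).trans (card_fin d).le

lemma mem_cubeNbhd_of_inDegree_pos {A : Finset (Fin d → Fin 2)} {x : Fin d → Fin 2}
    (hx : x ∉ A) (hpos : 0 < inDegree A x) : x ∈ cubeNbhd A := by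
  obtain ⟨i, hi⟩ := card_pos.mp hpos
  exact mem_filter.mpr ⟨mem_univ _, hx, flip x i, (mem_filter.mp hi).2, cubeAdj_flip x i⟩

lemma sqrtBoundary_nonneg (A : Finset (Fin d → Fin 2)) : 0 ≤ sqrtBoundary A :=
  sum_nonneg fun _ _ => Real.sqrt_nonneg _

lemma sqrtBoundary_le (A : Finset (Fin d → Fin 2)) :
    sqrtBoundary A ≤ #(cubeNbhd A) * √d := by
  calc sqrtBoundary A ≤ ∑ x ∈ Aᶜ, if x ∈ cubeNbhd A then √d else 0 := by
        refine sum_le_sum fun x hx => ?_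
        rcases (inDegree A x).eq_zero_or_pos with h0 | hpos
        · simp only [h0, CharP.cast_eq_zero, Real.sqrt_zero]
          split_ifs <;> simp
        · rw [if_pos (mem_cubeNbhd_of_inDegree_pos (mem_compl.mp hx) hpos)]
          exact Real.sqrt_le_sqrt (by exact_mod_cast inDegree_le A x)
    _ ≤ ∑ x, if x ∈ cubeNbhd A then √d else 0 :=
        sum_le_univ_sum_of_nonneg fun _ => by positivity
    _ = #(cubeNbhd A) * √d := by
        rw [sum_ite_mem, univ_inter, sum_const, nsmul_eq_mul]

lemma inDegree_cons (A : Finset (Fin (d + 1) → Fin 2)) (c : Fin 2) (x : Fin d → Fin 2) :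
    inDegree A (Fin.cons c x) =
      inDegree (slice A c) x + if x ∈ slice A (c + 1) then 1 else 0 := by
  rw [inDegree, inDegree, card_filter, card_filter, Fin.sum_univ_succ]
  simp only [flip, slice, Fin.cons_zero, Fin.update_cons_zero, Fin.cons_succ, ← Fin.cons_update,
    mem_filter, mem_univ, true_and]
  exact add_comm _ _

lemma sum_eq_sum_slice {M : Type*} [AddCommMonoid M] (A : Finset (Fin (d + 1) → Fin 2))
    (f : (Fin (d + 1) → Fin 2) → M) :
    ∑ y ∈ A, f y = ∑ c : Fin 2, ∑ x ∈ slice A c, f (Fin.cons c x) := by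
  simp only [slice, sum_filter]
  rw [← Fintype.sum_ite_mem, ← (Fin.consEquiv fun _ => Fin 2).sum_comp, Fintype.sum_prod_type]
  rfl

lemma slice_compl (A : Finset (Fin (d + 1) → Fin 2)) (c : Fin 2) :
    slice Aᶜ c = (slice A c)ᶜ := by
  ext x; simp [slice]

lemma card_eq_card_slice_add (A : Finset (Fin (d + 1) → Fin 2)) :
    #A = #(slice A 0) + #(slice A 1) := by
  rw [card_eq_sum_ones, sum_eq_sum_slice A, Fin.sum_univ_two, ← card_eq_sum_ones,
    ← card_eq_sum_ones]

lemma sqrtBoundary_eq_sum_slice (A : Finset (Fin (d + 1) → Fin 2)) :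
    sqrtBoundary A = ∑ c : Fin 2, ∑ x ∈ (slice A c)ᶜ, √(inDegree A (Fin.cons c x)) := by
  simp only [sqrtBoundary, sum_eq_sum_slice Aᶜ, slice_compl]

lemma mul_sqrtBoundary_slice_add_le (A : Finset (Fin (d + 1) → Fin 2)) (c : Fin 2)
    {p q : ℝ} :
    p * sqrtBoundary (slice A c) + q * #(slice A (c + 1) \ slice A c) ≤
      √(p ^ 2 + q ^ 2) * ∑ x ∈ (slice A c)ᶜ, √(inDegree A (Fin.cons c x)) := by
  have hcard : (#(slice A (c + 1) \ slice A c) : ℝ) =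
      ∑ x ∈ (slice A c)ᶜ, if x ∈ slice A (c + 1) then 1 else 0 := by
    rw [sum_boole, filter_mem_eq_inter, sdiff_eq, inter_comm]
    rfl
  rw [sqrtBoundary, hcard, mul_sum, mul_sum, mul_sum, ← sum_add_distrib]
  refine sum_le_sum fun x _ => ?_
  have hdeg := Nat.cast_nonneg (α := ℝ) (inDegree (slice A c) x)
  rw [inDegree_cons]
  split_ifs
  · simpa using mul_sqrt_add_mul_sqrt_le (p := p) (q := q) hdeg zero_le_one
  · simpa using mul_sqrt_add_mul_sqrt_le (p := p) (q := q) hdeg le_rfl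

lemma card_le_two_pow (A : Finset (Fin d → Fin 2)) : #A ≤ 2 ^ d := by
  simpa using card_le_univ A

theorem card_mul_sub_card_div_le_sqrtBoundary (A : Finset (Fin d → Fin 2)) :
    #A * (2 ^ d - #A) / 2 ^ d ≤ sqrtBoundary A := by
  induction d with
  | zero =>
    have hA : #A = 0 ∨ #A = 1 := Nat.le_one_iff_eq_zero_or_eq_one.mp (card_le_two_pow A)
    rcases hA with h | h <;> simp [h, sqrtBoundary_nonneg]
  | succ d ih =>
    have hab : (#A : ℝ) = #(slice A 0) + #(slice A 1) := by
      exact_mod_cast card_eq_card_slice_add A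
    have ha : (#(slice A 0) : ℝ) ≤ 2 ^ d := by exact_mod_cast card_le_two_pow (slice A 0)
    have hb : (#(slice A 1) : ℝ) ≤ 2 ^ d := by exact_mod_cast card_le_two_pow (slice A 1)
    set a : ℝ := (#(slice A 0) : ℝ)
    set b : ℝ := (#(slice A 1) : ℝ)
    set p := a * (2 ^ d - a) / 2 ^ d + b * (2 ^ d - b) / 2 ^ d
    have hp : 0 ≤ p := by
      have := sub_nonneg.mpr ha
      have := sub_nonneg.mpr hb
      positivity
    have hsdiff : |a - b| ≤ #(slice A 1 \ slice A 0) + #(slice A 0 \ slice A 1) :=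
      abs_card_sub_card_le_card_sdiff_add_card_sdiff _ _
    have h0 := mul_sqrtBoundary_slice_add_le A 0 (p := p) (q := |a - b|)
    have h1 := mul_sqrtBoundary_slice_add_le A 1 (p := p) (q := |a - b|)
    rw [show (0 : Fin 2) + 1 = 1 from rfl] at h0
    rw [show (1 : Fin 2) + 1 = 0 from rfl] at h1
    have hsplit := sqrtBoundary_eq_sum_slice A
    rw [Fin.sum_univ_two] at hsplit
    have hsqrt : √(p ^ 2 + |a - b| ^ 2) ≤ sqrtBoundary A :=
      sqrt_le_of_mul_add_mul_le hp (abs_nonneg _) (add_le_add (ih _) (ih _)) hsdiff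
        (sqrtBoundary_nonneg A) (by rw [hsplit, mul_add, mul_add, mul_add]; linarith)
    calc (#A : ℝ) * (2 ^ (d + 1) - #A) / 2 ^ (d + 1)
        = (a + b) * (2 * 2 ^ d - (a + b)) / (2 * 2 ^ d) := by rw [hab, pow_succ']
      _ ≤ √(p ^ 2 + (a - b) ^ 2) := add_mul_sub_div_le_sqrt (by positivity) (by positivity) ha
          (by positivity) hb
      _ = √(p ^ 2 + |a - b| ^ 2) := by rw [sq_abs]
      _ ≤ sqrtBoundary A := hsqrt

end Hypercube

/-- The vertex expansion of the hypercube graph is `Ω(1/√d)`: there is a constant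
`C > 0` such that for every `d` and every nonempty `S ⊆ {0,1}^d` with `|S| ≤ 2^(d-1)`,
`|N(S)| ≥ C·|S|/√d`. -/
theorem cube_vertex_expansion :
    ∃ C : ℝ, 0 < C ∧ ∀ (d : ℕ) (S : Finset (Fin d → Fin 2)),
      S.Nonempty → 2 * S.card ≤ 2 ^ d →
      C * S.card / Real.sqrt d ≤ (cubeNbhd S).card := by
  refine ⟨1 / 2, one_half_pos, fun d S _ hS => ?_⟩
  have hS' : 2 * (#S : ℝ) ≤ 2 ^ d := by exact_mod_cast hS
  have hhalf : (#S : ℝ) / 2 ≤ #S * (2 ^ d - #S) / 2 ^ d := by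
    rw [le_div_iff₀ (by positivity)]
    nlinarith [(#S).cast_nonneg (α := ℝ)]
  have hnbhd : (#S : ℝ) / 2 ≤ #(cubeNbhd S) * √d :=
    hhalf.trans ((Hypercube.card_mul_sub_card_div_le_sqrtBoundary S).trans
      (Hypercube.sqrtBoundary_le S))
  exact div_le_of_le_mul₀ (Real.sqrt_nonneg _) (Nat.cast_nonneg _) (by linarith)
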